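/- Let Γ ⊂ ℝⁿ be an open convex symmetric cone containing the positive orthant, and f : Γ → (0,∞) a concave symmetric function that is strictly increasing in each variable. Define f_{∞,n}(λ) = lim_{R→∞} f(λ₁,…,λ_{n−1},R) ∈ (0,∞]. Then either f_{∞,n}(λ) = ∞ for all λ ∈ Γ, or f_{∞,n}(λ) < ∞ for all λ ∈ Γ. -/

import Mathlib

/-!
Along each ray `x + t • eₙ` the function `f` is monotone, so it either tends to `∞` or converges.
If it is bounded on the ray from some `x ∈ Γ`, take any `y ∈ Γ` and, by openness, a point
`z = x + ε (x - y) ∈ Γ`. Then `x` is a convex combination of `z` and `y`, and concavity bounds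
`f` on the ray from `y` in terms of `f z` and the bound on the ray from `x`.
-/

open Filter Set Topology

theorem Convex.add_mem_of_smul_mem {E : Type*} [AddCommGroup E] [Module ℝ E] {Γ : Set E}
    (hconv : Convex ℝ Γ) (hcone : ∀ c : ℝ, 0 < c → ∀ x ∈ Γ, c • x ∈ Γ) {a b : E}
    (ha : a ∈ Γ) (hb : b ∈ Γ) : a + b ∈ Γ := by
  have hmid : (2⁻¹ : ℝ) • a + (2⁻¹ : ℝ) • b ∈ Γ :=
    hconv ha hb (by norm_num) (by norm_num) (by norm_num)
  convert hcone 2 two_pos _ hmid using 1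
  rw [smul_add, smul_smul, smul_smul]
  norm_num

theorem MonotoneOn.tendsto_atTop_or_tendsto_nhds {g : ℝ → ℝ} {a : ℝ}
    (hg : MonotoneOn g (Ici a)) :
    Tendsto g atTop atTop ∨ ∃ L, g a ≤ L ∧ Tendsto g atTop (𝓝 L) := by
  have hmono : Monotone fun t => g (max t a) := fun s t hst =>
    hg (le_max_right s a) (le_max_right t a) (max_le_max_right a hst)
  have heq : (fun t => g (max t a)) =ᶠ[atTop] g := by
    filter_upwards [eventually_ge_atTop a] with t ht
    rw [max_eq_left ht]
  refine (tendsto_atTop_of_monotone hmono).imp (fun h => h.congr' heq) ?_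
  rintro ⟨L, hL⟩
  exact ⟨L, by simpa using hmono.ge_of_tendsto hL a, hL.congr' heq⟩

section Concave

variable {E : Type*} [AddCommGroup E] [Module ℝ E] [TopologicalSpace E] [ContinuousAdd E]
  [ContinuousSMul ℝ E] {Γ : Set E} {f : E → ℝ}

theorem IsOpen.exists_pos_add_smul_mem (hΓ : IsOpen Γ) {x : E} (hx : x ∈ Γ) (w : E) :
    ∃ ε : ℝ, 0 < ε ∧ x + ε • w ∈ Γ := by
  have hcont : Tendsto (fun ε : ℝ => x + ε • w) (𝓝 0) (𝓝 x) :=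
    Continuous.tendsto' (by fun_prop) 0 x (by simp)
  have hev : ∀ᶠ ε in 𝓝[>] (0 : ℝ), x + ε • w ∈ Γ :=
    (hcont.eventually (hΓ.mem_nhds hx)).filter_mono nhdsWithin_le_nhds
  obtain ⟨ε, hεΓ, hε⟩ := (hev.and self_mem_nhdsWithin).exists
  exact ⟨ε, hε, hεΓ⟩

theorem ConcaveOn.isBoundedUnder_le_of_parallel_ray (hf : ConcaveOn ℝ Γ f) (hΓ : IsOpen Γ)
    {x y v : E} (hx : x ∈ Γ) (hy : ∀ᶠ t : ℝ in atTop, y + t • v ∈ Γ)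
    (hbdd : IsBoundedUnder (· ≤ ·) atTop fun t : ℝ => f (x + t • v)) :
    IsBoundedUnder (· ≤ ·) atTop fun t : ℝ => f (y + t • v) := by
  obtain ⟨B, hB⟩ := hbdd
  obtain ⟨ε, hε, hz⟩ := hΓ.exists_pos_add_smul_mem hx (x - y)
  set z := x + ε • (x - y)
  set a := (1 + ε)⁻¹
  set b := ε * (1 + ε)⁻¹
  have ha : 0 < a := by positivity
  have hb : 0 < b := by positivity
  have hab : a + b = 1 := by simp only [a, b]; field_simp
  -- `x = a • z + b • y`, so moving `y` by `t • v` moves `x` by `(b * t) • v`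
  have hcombo : ∀ t : ℝ, a • z + b • (y + t • v) = x + (b * t) • v := by
    intro t
    simp only [z, a, b]
    match_scalars <;> field_simp; ring
  refine ⟨(B - a * f z) / b, ?_⟩
  rw [eventually_map] at hB ⊢
  have hbt : Tendsto (b * ·) atTop atTop := tendsto_id.const_mul_atTop hb
  filter_upwards [hy, hbt.eventually hB] with t hyt hxt
  have hconc := hf.2 hz hyt ha.le hb.le hab
  rw [hcombo, smul_eq_mul, smul_eq_mul] at hconc
  rw [le_div_iff₀ hb]
  linarith

theorem ConcaveOn.tendsto_ray_atTop_or_tendsto_nhds (hf : ConcaveOn ℝ Γ f) (hΓ : IsOpen Γ)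
    {v : E} (hray : ∀ x ∈ Γ, ∀ t : ℝ, 0 ≤ t → x + t • v ∈ Γ)
    (hmono : ∀ x ∈ Γ, MonotoneOn (fun t : ℝ => f (x + t • v)) (Ici 0)) :
    (∀ x ∈ Γ, Tendsto (fun t : ℝ => f (x + t • v)) atTop atTop) ∨
      ∀ x ∈ Γ, ∃ L, f x ≤ L ∧ Tendsto (fun t : ℝ => f (x + t • v)) atTop (𝓝 L) := by
  have hdich : ∀ x ∈ Γ, Tendsto (fun t : ℝ => f (x + t • v)) atTop atTop ∨
      ∃ L, f x ≤ L ∧ Tendsto (fun t : ℝ => f (x + t • v)) atTop (𝓝 L) := fun x hx => by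
    simpa using (hmono x hx).tendsto_atTop_or_tendsto_nhds
  by_cases hbdd : ∃ x ∈ Γ, IsBoundedUnder (· ≤ ·) atTop fun t : ℝ => f (x + t • v)
  · obtain ⟨x, hx, hxbdd⟩ := hbdd
    refine .inr fun y hy => (hdich y hy).resolve_left fun htop => ?_
    exact not_isBoundedUnder_of_tendsto_atTop htop
      (hf.isBoundedUnder_le_of_parallel_ray hΓ hx
        ((eventually_ge_atTop 0).mono (hray y hy)) hxbdd)
  · push Not at hbdd
    refine .inl fun x hx => (hdich x hx).resolve_right ?_
    rintro ⟨L, -, hL⟩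
    exact hbdd x hx hL.isBoundedUnder_le

end Concave

theorem IsOpen.add_mem_of_nonneg {ι : Type*} {Γ : Set (ι → ℝ)} (hΓopen : IsOpen Γ)
    (hΓconv : Convex ℝ Γ) (hΓcone : ∀ c : ℝ, 0 < c → ∀ x ∈ Γ, c • x ∈ Γ)
    (hΓpos : {x : ι → ℝ | ∀ i, 0 < x i} ⊆ Γ) {x v : ι → ℝ} (hx : x ∈ Γ) (hv : 0 ≤ v) :
    x + v ∈ Γ := by
  obtain ⟨ε, hε, hxε⟩ := hΓopen.exists_pos_add_smul_mem hx (-1)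
  have hpos : ε • (1 : ι → ℝ) + v ∈ Γ := hΓpos fun i => by
    simpa using add_pos_of_pos_of_nonneg hε (hv i)
  convert hΓconv.add_mem_of_smul_mem hΓcone hxε hpos using 1
  module

section Coordinate

variable {ι : Type*} [DecidableEq ι]

theorem add_smul_single_eq_update (x : ι → ℝ) (i : ι) (t : ℝ) :
    x + t • Pi.single i 1 = Function.update x i (x i + t) := by
  ext j
  rcases eq_or_ne j i with rfl | hj <;> simp [*]

theorem monotoneOn_add_smul_single {i : ι} {Γ : Set (ι → ℝ)} {f : (ι → ℝ) → ℝ}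
    (hray : ∀ x ∈ Γ, ∀ t : ℝ, 0 ≤ t → x + t • Pi.single i 1 ∈ Γ)
    (hf : ∀ x ∈ Γ, ∀ R : ℝ, x i < R → f x < f (Function.update x i R))
    {x : ι → ℝ} (hx : x ∈ Γ) :
    MonotoneOn (fun t : ℝ => f (x + t • Pi.single i 1)) (Ici 0) := by
  intro s hs t _ hst
  rcases hst.eq_or_lt with rfl | hlt
  · rfl
  · have hxs := hray x hx s hs
    have h := hf _ hxs _ (lt_add_of_pos_right _ (sub_pos.2 hlt))
    rw [← add_smul_single_eq_update, add_assoc, ← add_smul, add_sub_cancel] at h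
    exact h.le

theorem Filter.Tendsto.update_of_add_smul_single {i : ι} {g : (ι → ℝ) → ℝ} {x : ι → ℝ}
    {l : Filter ℝ}
    (h : Tendsto (fun t : ℝ => g (x + t • Pi.single i 1)) atTop l) :
    Tendsto (fun R : ℝ => g (Function.update x i R)) atTop l := by
  convert h.comp (tendsto_atTop_add_const_right _ (-x i) tendsto_id) using 2 with R
  simp [add_smul_single_eq_update]

end Coordinate

theorem stmt_1_general {n : ℕ} (Γ : Set (Fin (n + 1) → ℝ)) (f : (Fin (n + 1) → ℝ) → ℝ)
    (hΓopen : IsOpen Γ) (hΓconv : Convex ℝ Γ)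
    (hΓcone : ∀ c : ℝ, 0 < c → ∀ x ∈ Γ, c • x ∈ Γ)
    (hΓpos : {x : Fin (n + 1) → ℝ | ∀ i, 0 < x i} ⊆ Γ)
    (hfpos : ∀ x ∈ Γ, 0 < f x)
    (hfconc : ConcaveOn ℝ Γ f)
    (hfmono : ∀ x ∈ Γ, ∀ i : Fin (n + 1), ∀ R : ℝ, x i < R →
      f x < f (Function.update x i R)) :
    (∀ x ∈ Γ, Tendsto (fun R : ℝ => f (Function.update x (Fin.last n) R)) atTop atTop) ∨
    (∀ x ∈ Γ, ∃ L : ℝ, 0 < L ∧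
      Tendsto (fun R : ℝ => f (Function.update x (Fin.last n) R)) atTop (nhds L)) := by
  have hray : ∀ x ∈ Γ, ∀ t : ℝ, 0 ≤ t → x + t • Pi.single (Fin.last n) 1 ∈ Γ :=
    fun x hx t ht => hΓopen.add_mem_of_nonneg hΓconv hΓcone hΓpos hx
      (smul_nonneg ht (Pi.single_nonneg.2 zero_le_one))
  have hmono : ∀ x ∈ Γ, MonotoneOn (fun t : ℝ => f (x + t • Pi.single (Fin.last n) 1)) (Ici 0) :=
    fun _ hx => monotoneOn_add_smul_single hray (fun y hy => hfmono y hy _) hx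
  rcases hfconc.tendsto_ray_atTop_or_tendsto_nhds hΓopen hray hmono with h | h
  · exact .inl fun x hx => (h x hx).update_of_add_smul_single
  · refine .inr fun x hx => ?_
    obtain ⟨L, hL, hlim⟩ := h x hx
    exact ⟨L, (hfpos x hx).trans_le hL, hlim.update_of_add_smul_single⟩

/-- dichotomy for `f_{∞,n}`: either the limit as the last coordinate
tends to `∞` is `∞` for all `λ ∈ Γ`, or it is finite for all `λ ∈ Γ`. -/
theorem stmt_1 {n : ℕ} (Γ : Set (Fin (n + 1) → ℝ)) (f : (Fin (n + 1) → ℝ) → ℝ)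
    (hΓopen : IsOpen Γ) (hΓconv : Convex ℝ Γ)
    (hΓcone : ∀ c : ℝ, 0 < c → ∀ x ∈ Γ, c • x ∈ Γ)
    (hΓsym : ∀ σ : Equiv.Perm (Fin (n + 1)), ∀ x ∈ Γ, x ∘ σ ∈ Γ)
    (hΓpos : {x : Fin (n + 1) → ℝ | ∀ i, 0 < x i} ⊆ Γ)
    (hfpos : ∀ x ∈ Γ, 0 < f x)
    (hfconc : ConcaveOn ℝ Γ f)
    (hfsym : ∀ σ : Equiv.Perm (Fin (n + 1)), ∀ x ∈ Γ, f (x ∘ σ) = f x)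
    (hfmono : ∀ x ∈ Γ, ∀ i : Fin (n + 1), ∀ R : ℝ, x i < R →
      f x < f (Function.update x i R)) :
    (∀ x ∈ Γ, Tendsto (fun R : ℝ => f (Function.update x (Fin.last n) R)) atTop atTop) ∨
    (∀ x ∈ Γ, ∃ L : ℝ, 0 < L ∧
      Tendsto (fun R : ℝ => f (Function.update x (Fin.last n) R)) atTop (nhds L)) :=
  stmt_1_general Γ f hΓopen hΓconv hΓcone hΓpos hfpos hfconc hfmono
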